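/- arXiv:1804.02385 — 4 statements merged into one kernel-verified Lean document; each statement's English description precedes it below -/
import Mathlib

section
/- The Moser spindle is a unit-distance graph in the plane: there exist 7 distinct points in ℝ² such that the 11 specified adjacent pairs are each at Euclidean distance exactly 1. -/
/-!
In `ℂ`, take the rhombus `0, 1, ω, 1 + ω` made of two unit equilateral triangles and its image
under multiplication by a unit `z`, an isometry fixing `0`. The tips `1 + ω` and `z (1 + ω)` are
at distance `‖1 + ω‖ ‖1 - z‖ = √3 ‖1 - z‖`; with `‖z‖ = 1` this is `1` exactly when
`Re z = 5 / 6`. Points of different modulus (`0`, `1`, `√3`) are distinct; points of equal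
modulus are joined by an edge or separated by `z ≠ 1, ω, ω⁻¹`. Finally `ℂ` is isometric to the
Euclidean plane.
-/

/-- A point in the Euclidean plane with given coordinates. -/
noncomputable def pt (x y : ℝ) : EuclideanSpace ℝ (Fin 2) :=
  (WithLp.equiv 2 (Fin 2 → ℝ)).symm ![x, y]

def IsMoserSpindle {P : Type*} [MetricSpace P] (A B C D E X Y : P) : Prop :=
  [A, B, C, D, E, X, Y].Pairwise (· ≠ ·) ∧
    dist A B = 1 ∧ dist A C = 1 ∧ dist B X = 1 ∧ dist C X = 1 ∧
    dist A D = 1 ∧ dist A E = 1 ∧ dist D Y = 1 ∧ dist E Y = 1 ∧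
    dist B C = 1 ∧ dist D E = 1 ∧ dist X Y = 1

theorem IsMoserSpindle.map {P Q : Type*} [MetricSpace P] [MetricSpace Q] {f : P → Q}
    (hf : Isometry f) {A B C D E X Y : P} (h : IsMoserSpindle A B C D E X Y) :
    IsMoserSpindle (f A) (f B) (f C) (f D) (f E) (f X) (f Y) := by
  obtain ⟨hne, h⟩ := h
  exact ⟨List.pairwise_map.2 (hne.imp hf.injective.ne), by simpa only [hf.dist_eq] using h⟩

theorem isMoserSpindle_of_norm {𝕜 : Type*} [NormedField 𝕜] {ω z : 𝕜}
    (hω : ‖ω‖ = 1) (hω₁ : ‖1 - ω‖ = 1) (hz : ‖z‖ = 1)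
    (htip : ‖1 + ω‖ * ‖1 - z‖ = 1) (htip₁ : ‖1 + ω‖ ≠ 1) :
    IsMoserSpindle 0 1 ω z (z * ω) (1 + ω) (z * (1 + ω)) := by
  have hrot : ∀ a b : 𝕜, dist (z * a) (z * b) = dist a b := fun a b => by
    rw [dist_eq_norm, dist_eq_norm, ← mul_sub, norm_mul, hz, one_mul]
  have hAB : dist (0 : 𝕜) 1 = 1 := by rw [dist_zero_left, norm_one]
  have hAC : dist 0 ω = 1 := by rw [dist_zero_left, hω]
  have hBX : dist 1 (1 + ω) = 1 := by rw [dist_self_add_right, hω]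
  have hCX : dist ω (1 + ω) = 1 := by rw [add_comm, dist_self_add_right, norm_one]
  have hBC : dist 1 ω = 1 := by rw [dist_eq_norm, hω₁]
  have hAD : dist 0 z = 1 := by simpa only [mul_zero, mul_one, hAB] using hrot 0 1
  have hAE : dist 0 (z * ω) = 1 := by simpa only [mul_zero, hAC] using hrot 0 ω
  have hDY : dist z (z * (1 + ω)) = 1 := by simpa only [mul_one, hBX] using hrot 1 (1 + ω)
  have hEY : dist (z * ω) (z * (1 + ω)) = 1 := by rw [hrot, hCX]
  have hDE : dist z (z * ω) = 1 := by simpa only [mul_one, hBC] using hrot 1 ω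
  have hXY : dist (1 + ω) (z * (1 + ω)) = 1 := by
    rw [dist_eq_norm, ← one_sub_mul, norm_mul, mul_comm, htip]
  have hX₀ : ‖1 + ω‖ ≠ 0 := by rintro h; simp [h] at htip
  have hω₀ : ω ≠ 0 := norm_ne_zero_iff.1 (hω ▸ one_ne_zero)
  have hz₁ : z ≠ 1 := by rintro rfl; simp at htip
  have hzω : z ≠ ω := by rintro rfl; exact htip₁ (by simpa [hω₁] using htip)
  have hzω₁ : z * ω ≠ 1 := by
    intro h
    have : 1 - z = (ω - 1) * z := by linear_combination -h
    exact htip₁ (by simpa [this, norm_mul, hz, norm_sub_rev ω 1, hω₁] using htip)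
  have edge : ∀ {a b : 𝕜}, dist a b = 1 → a ≠ b := fun h => dist_pos.1 (h ▸ one_pos)
  have apart : ∀ {a b : 𝕜}, ‖a‖ ≠ ‖b‖ → a ≠ b := ne_of_apply_ne _
  refine ⟨?_, hAB, hAC, hBX, hCX, hAD, hAE, hDY, hEY, hBC, hDE, hXY⟩
  simp only [List.pairwise_cons, List.mem_cons, List.not_mem_nil, forall_eq_or_imp, forall_eq,
    or_false, false_implies, implies_true, and_true, List.Pairwise.nil]
  refine ⟨⟨edge hAB, edge hAC, edge hAD, edge hAE, apart ?_, apart ?_⟩,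
    ⟨edge hBC, hz₁.symm, hzω₁.symm, edge hBX, apart ?_⟩,
    ⟨hzω.symm, fun h => hz₁ (mul_right_cancel₀ hω₀ ((one_mul ω).trans h).symm), edge hCX,
      apart ?_⟩,
    ⟨edge hDE, apart ?_, edge hDY⟩, ⟨apart ?_, edge hEY⟩, edge hXY⟩
  all_goals simp only [norm_zero, norm_one, norm_mul, hω, hz, one_mul]
  exacts [hX₀.symm, hX₀.symm, htip₁.symm, htip₁.symm, htip₁.symm, htip₁.symm]

theorem exists_isMoserSpindle_complex : ∃ A B C D E X Y : ℂ, IsMoserSpindle A B C D E X Y := by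
  have h3 : √3 ^ 2 = 3 := Real.sq_sqrt (by norm_num)
  have h11 : √11 ^ 2 = 11 := Real.sq_sqrt (by norm_num)
  let ω : ℂ := ⟨1 / 2, √3 / 2⟩
  let z : ℂ := ⟨5 / 6, √11 / 6⟩
  have hω : Complex.normSq ω = 1 := by
    simp [ω, Complex.normSq_apply]; linear_combination h3 / 4
  have hω₁ : Complex.normSq (1 - ω) = 1 := by
    simp [ω, Complex.normSq_apply]; linear_combination h3 / 4
  have hz : Complex.normSq z = 1 := by
    simp [z, Complex.normSq_apply]; linear_combination h11 / 36
  have hX : Complex.normSq (1 + ω) = 3 := by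
    simp [ω, Complex.normSq_apply]; linear_combination h3 / 4
  have hz₁ : Complex.normSq (1 - z) = 1 / 3 := by
    simp [z, Complex.normSq_apply]; linear_combination h11 / 36
  refine ⟨_, _, _, _, _, _, _, isMoserSpindle_of_norm (ω := ω) (z := z) ?_ ?_ ?_ ?_ ?_⟩
  all_goals simp only [Complex.norm_def, hω, hω₁, hz, hX, hz₁, Real.sqrt_one]
  · rw [← Real.sqrt_mul zero_le_three]; norm_num
  · norm_num

/-- The Moser spindle is a unit-distance graph in the plane: there exist 7 distinct
points in ℝ² such that the 11 specified adjacent pairs (A–B, A–C, B–X, C–X, A–D,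
A–E, D–Y, E–Y, B–C, D–E, X–Y) are each at Euclidean distance exactly 1. -/
theorem moser_spindle_is_unit_distance_graph :
    ∃ A B C D E X Y : EuclideanSpace ℝ (Fin 2),
      [A, B, C, D, E, X, Y].Pairwise (· ≠ ·) ∧
      dist A B = 1 ∧ dist A C = 1 ∧ dist B X = 1 ∧ dist C X = 1 ∧
      dist A D = 1 ∧ dist A E = 1 ∧ dist D Y = 1 ∧ dist E Y = 1 ∧
      dist B C = 1 ∧ dist D E = 1 ∧ dist X Y = 1 := by
  obtain ⟨A, B, C, D, E, X, Y, h⟩ := exists_isMoserSpindle_complex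
  exact ⟨_, _, _, _, _, _, _, h.map Complex.orthonormalBasisOneI.repr.isometry⟩
end

section
/- Every coloring of the plane ℝ² with 3 colors contains two points at Euclidean distance 1 receiving the same color. -/
/-!
If no two points at distance 1 share a color, then two points `x, y` at distance `√3` share
one: together with the two points at distance 1 from both of them, they form a rhombus of two
unit equilateral triangles, whose common edge uses up two of the three colors. The Moser
spindle glues two such rhombi at a vertex so that their far vertices are at distance 1,
a contradiction. Nothing beyond multiplication by complex scalars is needed, so the argument
runs in any nontrivial complex normed space, and `ℝ²` is isometric to `ℂ`.
-/

open Complex ComplexConjugate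

lemma Fin.three_eq_of_ne {a b c d : Fin 3} (hab : a ≠ b) (hac : a ≠ c) (hbc : b ≠ c)
    (hdb : d ≠ b) (hdc : d ≠ c) : a = d := by
  omega

namespace MoserSpindle

/-- The centroid of the equilateral triangle `0, 1, exp (π i / 3)`: the points `0, 1, u, ū`
form a rhombus whose sides and short diagonal have length `1 / √3`. -/
noncomputable def equilateralCentroid : ℂ := ⟨1 / 2, √3 / 6⟩

lemma norm_equilateralCentroid : ‖equilateralCentroid‖ = √3 / 3 := by
  rw [norm_eq_sqrt_sq_add_sq, Real.sqrt_eq_iff_mul_self_eq_of_pos (by positivity)]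
  simp only [equilateralCentroid]
  ring_nf
  rw [Real.sq_sqrt (by norm_num)]
  norm_num

lemma one_sub_equilateralCentroid : 1 - equilateralCentroid = conj equilateralCentroid := by
  apply Complex.ext <;> norm_num [equilateralCentroid]

lemma norm_equilateralCentroid_sub_conj :
    ‖equilateralCentroid - conj equilateralCentroid‖ = √3 / 3 := by
  rw [sub_conj, norm_mul, norm_I, mul_one, norm_real,
    Real.norm_of_nonneg (by simp [equilateralCentroid]; positivity)]
  simp [equilateralCentroid]
  ring

noncomputable def tip : ℂ := ⟨√11 / 2, 1 / 2⟩

lemma norm_tip : ‖tip‖ = √3 := by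
  rw [norm_eq_sqrt_sq_add_sq]
  congr 1
  simp only [tip, div_pow, Real.sq_sqrt (by norm_num : (0 : ℝ) ≤ 11)]
  norm_num

lemma tip_sub_conj : tip - conj tip = I := by
  simp [sub_conj, tip]

end MoserSpindle

open MoserSpindle

section

variable {E : Type*} [NormedAddCommGroup E] [NormedSpace ℂ E]

lemma dist_smul_smul_right (a b : ℂ) (v : E) : dist (a • v) (b • v) = ‖a - b‖ * ‖v‖ := by
  rw [dist_eq_norm, ← sub_smul, norm_smul]

lemma color_eq_of_dist_eq_sqrt_three {c : E → Fin 3} (hc : ∀ x y, dist x y = 1 → c x ≠ c y)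
    {x y : E} (hxy : dist x y = √3) : c x = c y := by
  set d := y - x
  have hd : ‖d‖ = √3 := by rw [← hxy, dist_eq_norm']
  have hunit : ∀ a b : ℂ, ‖a - b‖ = √3 / 3 → dist (x + a • d) (x + b • d) = 1 := by
    intro a b hab
    rw [dist_add_left, dist_smul_smul_right, hab, hd, div_mul_eq_mul_div,
      Real.mul_self_sqrt (by norm_num)]
    norm_num
  set u := equilateralCentroid
  have hxz := hunit 0 u (by rw [zero_sub, norm_neg, norm_equilateralCentroid])
  have hxw := hunit 0 (conj u) (by rw [zero_sub, norm_neg, norm_conj, norm_equilateralCentroid])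
  have hzw := hunit u (conj u) norm_equilateralCentroid_sub_conj
  have hyz := hunit 1 u (by rw [one_sub_equilateralCentroid, norm_conj, norm_equilateralCentroid])
  have hyw := hunit 1 (conj u) (by
    rw [← map_one conj, ← map_sub, one_sub_equilateralCentroid, conj_conj,
      norm_equilateralCentroid])
  have hx : x + (0 : ℂ) • d = x := by simp
  have hy : x + (1 : ℂ) • d = y := by simp [d]
  rw [hx] at hxz hxw
  rw [hy] at hyz hyw
  exact Fin.three_eq_of_ne (hc _ _ hxz) (hc _ _ hxw) (hc _ _ hzw) (hc _ _ hyz) (hc _ _ hyw)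

theorem exists_dist_eq_one_and_color_eq [Nontrivial E] (c : E → Fin 3) :
    ∃ x y : E, dist x y = 1 ∧ c x = c y := by
  by_contra! hc
  obtain ⟨v, hv⟩ : ∃ v : E, ‖v‖ = 1 := by
    obtain ⟨w, hw⟩ := exists_ne (0 : E)
    exact ⟨_, norm_smul_inv_norm (𝕜 := ℂ) hw⟩
  have hp : c 0 = c (tip • v) := color_eq_of_dist_eq_sqrt_three hc <| by
    rw [dist_zero_left, norm_smul, norm_tip, hv, mul_one]
  have hq : c 0 = c (conj tip • v) := color_eq_of_dist_eq_sqrt_three hc <| by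
    rw [dist_zero_left, norm_smul, norm_conj, norm_tip, hv, mul_one]
  refine hc _ _ ?_ (hp.symm.trans hq)
  rw [dist_smul_smul_right, tip_sub_conj, norm_I, hv, one_mul]

end

/-- Every coloring of the plane ℝ² with 3 colors contains two points at Euclidean
distance 1 receiving the same color (the classical lower bound CNP ≥ 4). -/
theorem plane_three_coloring_monochromatic_unit_pair
    (c : EuclideanSpace ℝ (Fin 2) → Fin 3) :
    ∃ x y : EuclideanSpace ℝ (Fin 2), dist x y = 1 ∧ c x = c y := by
  let e := Complex.orthonormalBasisOneI.repr
  obtain ⟨x, y, hxy, hc⟩ := exists_dist_eq_one_and_color_eq (c ∘ e)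
  exact ⟨e x, e y, by rwa [e.dist_map], hc⟩
end

section
/- There exists a proper 7-coloring of the plane: a function c : ℝ² → Fin 7 such that any two points at Euclidean distance exactly 1 receive different colors. -/
/-!
Tile the plane by half-open bricks of width `6/7` and height `1/2`, the `j`-th row shifted by
`5/3` of a brick width per row, and give brick `(i, j)` the colour `i + 3j mod 7`. A brick has
diameter `√(36/49 + 1/4) < 1`, so two points at distance `1` lie in different bricks. Since both
coordinates of such points differ by at most `1`, their brick indices differ by some `(a, b)` with
`|b| < 3` and `|6a - 10b| < 13`, and the only such vector with `a + 3b ≡ 0 mod 7` is `0`.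
-/

noncomputable def brick (p : EuclideanSpace ℝ (Fin 2)) : ℤ × ℤ :=
  (⌊7 / 6 * p 0 + 5 / 3 * ⌊2 * p 1⌋⌋, ⌊2 * p 1⌋)

def brickColor (b : ℤ × ℤ) : ZMod 7 :=
  ((b.1 + 3 * b.2 : ℤ) : ZMod 7)

theorem brickColor_eq_iff {b b' : ℤ × ℤ} :
    brickColor b = brickColor b' ↔ 7 ∣ (b.1 - b'.1) + 3 * (b.2 - b'.2) := by
  rw [brickColor, brickColor, eq_comm, ZMod.intCast_eq_intCast_iff_dvd_sub]
  constructor <;> intro h <;> omega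

theorem eq_zero_of_seven_dvd_add_three_mul {a b : ℤ} (hb : |b| < 3) (ha : |6 * a - 10 * b| < 13)
    (h : 7 ∣ a + 3 * b) : a = 0 ∧ b = 0 := by
  rw [abs_lt] at ha hb
  omega

theorem Int.abs_floor_sub_floor_sub_lt_one {R : Type*} [CommRing R] [LinearOrder R]
    [IsStrictOrderedRing R] [FloorRing R] (a b : R) :
    |((⌊a⌋ - ⌊b⌋ : ℤ) : R) - (a - b)| < 1 := by
  rw [abs_sub_lt_iff]
  push_cast
  constructor <;> linarith [Int.floor_le a, Int.floor_le b, Int.lt_floor_add_one a,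
    Int.lt_floor_add_one b]

theorem EuclideanSpace.dist_sq_eq_fin_two (p q : EuclideanSpace ℝ (Fin 2)) :
    dist p q ^ 2 = (p 0 - q 0) ^ 2 + (p 1 - q 1) ^ 2 := by
  simp [EuclideanSpace.dist_sq_eq, Fin.sum_univ_two, Real.dist_eq, sq_abs]

theorem dist_lt_one_of_brick_eq {p q : EuclideanSpace ℝ (Fin 2)} (h : brick p = brick q) :
    dist p q < 1 := by
  obtain ⟨hcol, hrow⟩ := Prod.ext_iff.mp h
  simp only [brick] at hcol hrow
  rw [hrow] at hcol
  have hy := Int.abs_sub_lt_one_of_floor_eq_floor hrow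
  have hx := Int.abs_sub_lt_one_of_floor_eq_floor hcol
  rw [abs_sub_lt_iff] at hx hy
  have hsq : dist p q ^ 2 < 1 := by
    rw [EuclideanSpace.dist_sq_eq_fin_two]
    nlinarith
  exact (pow_lt_one_iff_of_nonneg dist_nonneg two_ne_zero).mp hsq

theorem abs_brick_snd_sub_lt {p q : EuclideanSpace ℝ (Fin 2)} (hy : |p 1 - q 1| ≤ 1) :
    |(brick p).2 - (brick q).2| < 3 := by
  have hfloor := Int.abs_floor_sub_floor_sub_lt_one (2 * p 1) (2 * q 1)
  rw [abs_le] at hy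
  rw [abs_lt] at hfloor
  rw [← Int.cast_lt (R := ℝ), Int.cast_abs, abs_lt]
  simp only [brick]
  push_cast at hfloor ⊢
  constructor <;> linarith

theorem abs_brick_fst_sub_lt {p q : EuclideanSpace ℝ (Fin 2)} (hx : |p 0 - q 0| ≤ 1) :
    |6 * ((brick p).1 - (brick q).1) - 10 * ((brick p).2 - (brick q).2)| < 13 := by
  have hfloor := Int.abs_floor_sub_floor_sub_lt_one (7 / 6 * p 0 + 5 / 3 * ⌊2 * p 1⌋)
    (7 / 6 * q 0 + 5 / 3 * ⌊2 * q 1⌋)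
  rw [abs_le] at hx
  rw [abs_lt] at hfloor
  rw [← Int.cast_lt (R := ℝ), Int.cast_abs, abs_lt]
  simp only [brick]
  push_cast at hfloor ⊢
  constructor <;> linarith

theorem brick_eq_of_brickColor_eq {p q : EuclideanSpace ℝ (Fin 2)} (hpq : dist p q ≤ 1)
    (h : brickColor (brick p) = brickColor (brick q)) : brick p = brick q := by
  obtain ⟨hi, hj⟩ := eq_zero_of_seven_dvd_add_three_mul
    (abs_brick_snd_sub_lt ((PiLp.dist_apply_le p q 1).trans hpq))
    (abs_brick_fst_sub_lt ((PiLp.dist_apply_le p q 0).trans hpq)) (brickColor_eq_iff.mp h)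
  exact Prod.ext (sub_eq_zero.mp hi) (sub_eq_zero.mp hj)

/-- There exists a proper 7-coloring of the plane: a function c : ℝ² → Fin 7 such that
any two points at Euclidean distance exactly 1 receive different colors. -/
theorem plane_proper_seven_coloring_exists :
    ∃ c : EuclideanSpace ℝ (Fin 2) → Fin 7,
      ∀ x y : EuclideanSpace ℝ (Fin 2), dist x y = 1 → c x ≠ c y :=
  ⟨fun p => brickColor (brick p), fun _ _ hxy hc =>
    (dist_lt_one_of_brick_eq (brick_eq_of_brickColor_eq hxy.le hc)).ne hxy⟩
end

section
/- If graph M (with distinguished subgraph H) admits no proper 4-coloring in which H contains a monochromatic triple, and graph L (a union of copies of H) admits no proper 4-coloring in which every copy of H is free of monochromatic triples, then the union graph N obtained by gluing a copy of M onto each copy of H in L admits no proper 4-coloring. -/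
/-- The gluing principle behind de Grey's construction. Let `H ⊆ M` be finite point
sets in the plane, and let `f i` (for `i` in a finite index set) be plane isometries
whose images of `H` are the copies of `H` making up `L = ⋃ i, f i '' H`. Suppose:
(1) `M` admits no proper 4-coloring (w.r.t. unit-distance pairs inside `M`) in which
`H` contains a monochromatic triple, and (2) `L` admits no proper 4-coloring in which
every copy `f i '' H` is free of monochromatic triples. Then the union graph
`N = ⋃ i, f i '' M` admits no proper 4-coloring. -/
theorem glued_union_not_four_colorable
    (H M : Set (EuclideanSpace ℝ (Fin 2))) (hHM : H ⊆ M) (hMfin : M.Finite)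
    (ι : Type) [Fintype ι]
    (f : ι → EuclideanSpace ℝ (Fin 2) → EuclideanSpace ℝ (Fin 2))
    (hf : ∀ i, Isometry (f i))
    (L : Set (EuclideanSpace ℝ (Fin 2))) (hL : L = ⋃ i, f i '' H)
    (hM : ∀ c : EuclideanSpace ℝ (Fin 2) → Fin 4,
      (∀ x ∈ M, ∀ y ∈ M, dist x y = 1 → c x ≠ c y) →
      ¬ ∃ x ∈ H, ∃ y ∈ H, ∃ z ∈ H, x ≠ y ∧ x ≠ z ∧ y ≠ z ∧ c x = c y ∧ c x = c z)
    (hLc : ∀ c : EuclideanSpace ℝ (Fin 2) → Fin 4,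
      (∀ x ∈ L, ∀ y ∈ L, dist x y = 1 → c x ≠ c y) →
      ∃ i, ∃ x ∈ f i '' H, ∃ y ∈ f i '' H, ∃ z ∈ f i '' H,
        x ≠ y ∧ x ≠ z ∧ y ≠ z ∧ c x = c y ∧ c x = c z) :
    ¬ ∃ c : EuclideanSpace ℝ (Fin 2) → Fin 4,
      ∀ x ∈ ⋃ i, f i '' M, ∀ y ∈ ⋃ i, f i '' M, dist x y = 1 → c x ≠ c y := by
  rintro ⟨c, hc⟩
  have hmem : ∀ i, ∀ x ∈ H, f i x ∈ ⋃ j, f j '' M := fun i x hx =>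
    Set.mem_iUnion.2 ⟨i, ⟨x, hHM hx, rfl⟩⟩
  have hcL : ∀ x ∈ L, ∀ y ∈ L, dist x y = 1 → c x ≠ c y := by
    intro x hx y hy hd
    rw [hL] at hx hy
    rcases Set.mem_iUnion.1 hx with ⟨i, a, ha, rfl⟩
    rcases Set.mem_iUnion.1 hy with ⟨j, b, hb, rfl⟩
    exact hc _ (hmem i a ha) _ (hmem j b hb) hd
  obtain ⟨i, x, ⟨a, ha, rfl⟩, y, ⟨b, hb, rfl⟩, z, ⟨d, hd, rfl⟩, hxy, hxz, hyz, h1, h2⟩ :=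
    hLc c hcL
  have hinj := (hf i).injective
  refine hM (fun p => c (f i p)) ?_ ⟨a, ha, b, hb, d, hd, ?_, ?_, ?_, h1, h2⟩
  · intro x hx y hy hdist
    exact hc _ (Set.mem_iUnion.2 ⟨i, x, hx, rfl⟩) _ (Set.mem_iUnion.2 ⟨i, y, hy, rfl⟩)
      (by rw [(hf i).dist_eq]; exact hdist)
  · exact fun h => hxy (by rw [h])
  · exact fun h => hxz (by rw [h])
  · exact fun h => hyz (by rw [h])
end
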